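/- Let τ ∈ 𝔥₂ and write θ₁,…,θ₁₀ for the ten even genus-2 theta constants. Then the following six identities hold: θ₂²θ₄² = θ₁²θ₃² − θ₇²θ₉²; θ₂⁴ + θ₄⁴ = θ₁⁴ + θ₃⁴ − θ₇⁴ − θ₉⁴; θ₈²θ₅² = θ₁²θ₇² − θ₃²θ₉²; θ₈⁴ + θ₅⁴ = θ₁⁴ − θ₃⁴ + θ₇⁴ − θ₉⁴; θ₆²θ₁₀² = −θ₁²θ₉² + θ₃²θ₇²; θ₆⁴ + θ₁₀⁴ = θ₁⁴ − θ₃⁴ − θ₇⁴ + θ₉⁴. -/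

import Mathlib

open scoped BigOperators

/-- The genus-2 theta constant with rational characteristics `a, b ∈ ℚ²`:
`θ[a;b](0,τ) = ∑_{u ∈ ℤ²} exp(πi((u+a)ᵀτ(u+a) + 2(u+a)ᵀb))`. -/
noncomputable def thetaNull2 (a b : Fin 2 → ℚ) (τ : Matrix (Fin 2) (Fin 2) ℂ) : ℂ :=
  ∑' u : Fin 2 → ℤ, Complex.exp ((Real.pi : ℂ) * Complex.I *
    ((∑ i, ∑ j, ((u i : ℂ) + (a i : ℂ)) * τ i j * ((u j : ℂ) + (a j : ℂ))) +
      2 * ∑ i, ((u i : ℂ) + (a i : ℂ)) * (b i : ℂ)))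

noncomputable def θ₁ (τ : Matrix (Fin 2) (Fin 2) ℂ) : ℂ :=
  thetaNull2 ![0, 0] ![0, 0] τ
noncomputable def θ₂ (τ : Matrix (Fin 2) (Fin 2) ℂ) : ℂ :=
  thetaNull2 ![0, 0] ![1/2, 1/2] τ
noncomputable def θ₃ (τ : Matrix (Fin 2) (Fin 2) ℂ) : ℂ :=
  thetaNull2 ![0, 0] ![1/2, 0] τ
noncomputable def θ₄ (τ : Matrix (Fin 2) (Fin 2) ℂ) : ℂ :=
  thetaNull2 ![0, 0] ![0, 1/2] τ
noncomputable def θ₅ (τ : Matrix (Fin 2) (Fin 2) ℂ) : ℂ :=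
  thetaNull2 ![1/2, 0] ![0, 0] τ
noncomputable def θ₆ (τ : Matrix (Fin 2) (Fin 2) ℂ) : ℂ :=
  thetaNull2 ![1/2, 0] ![0, 1/2] τ
noncomputable def θ₇ (τ : Matrix (Fin 2) (Fin 2) ℂ) : ℂ :=
  thetaNull2 ![0, 1/2] ![0, 0] τ
noncomputable def θ₈ (τ : Matrix (Fin 2) (Fin 2) ℂ) : ℂ :=
  thetaNull2 ![1/2, 1/2] ![0, 0] τ
noncomputable def θ₉ (τ : Matrix (Fin 2) (Fin 2) ℂ) : ℂ :=
  thetaNull2 ![0, 1/2] ![1/2, 0] τ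
noncomputable def θ₁₀ (τ : Matrix (Fin 2) (Fin 2) ℂ) : ℂ :=
  thetaNull2 ![1/2, 1/2] ![1/2, 1/2] τ

namespace GoepelAux
open Complex

abbrev V := Fin 2 → ℤ

noncomputable def Eq2 (τ : Matrix (Fin 2) (Fin 2) ℂ) (m : V) : ℂ :=
  (∑ i, ∑ j, (m i : ℂ) * τ i j * (m j : ℂ)) / 2

noncomputable def Ld (m c : V) : ℂ := ∑ i, (m i : ℂ) * (c i : ℂ)

noncomputable def Fterm (τ : Matrix (Fin 2) (Fin 2) ℂ) (c : V) (m : V) : ℂ :=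
  cexp ((Real.pi : ℂ) * I * (Eq2 τ m + Ld m c))

noncomputable def Fc (τ : Matrix (Fin 2) (Fin 2) ℂ) (c : V) : ℂ := ∑' m : V, Fterm τ c m

def xor2 (s c : V) : V := fun i => s i + c i - 2 * s i * c i

noncomputable def θt (a b : Fin 2 → ℚ) (τ : Matrix (Fin 2) (Fin 2) ℂ) (u : V) : ℂ :=
  Complex.exp ((Real.pi : ℂ) * Complex.I *
    ((∑ i, ∑ j, ((u i : ℂ) + (a i : ℂ)) * τ i j * ((u j : ℂ) + (a j : ℂ))) +
      2 * ∑ i, ((u i : ℂ) + (a i : ℂ)) * (b i : ℂ)))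

lemma thetaNull2_eq (a b : Fin 2 → ℚ) (τ : Matrix (Fin 2) (Fin 2) ℂ) :
    thetaNull2 a b τ = ∑' u : V, θt a b τ u := rfl

lemma exp_even (X Y : ℂ) (k : ℤ) (h : X = Y + 2 * k) :
    cexp ((Real.pi : ℂ) * I * X) = cexp ((Real.pi : ℂ) * I * Y) := by
  rw [h, mul_add, Complex.exp_add,
    show (Real.pi : ℂ) * I * (2 * k) = (k : ℂ) * (2 * (Real.pi : ℂ) * I) by ring,
    Complex.exp_int_mul_two_pi_mul_I, mul_one]

lemma exp_odd (X Y : ℂ) (k : ℤ) (h : X = Y + (2 * k + 1)) :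
    cexp ((Real.pi : ℂ) * I * X) = - cexp ((Real.pi : ℂ) * I * Y) := by
  have : (Real.pi : ℂ) * I * X = ((Real.pi : ℂ) * I * Y + (k : ℂ) * (2 * (Real.pi : ℂ) * I))
      + (Real.pi : ℂ) * I := by rw [h]; ring
  rw [this, Complex.exp_add, Complex.exp_add, Complex.exp_int_mul_two_pi_mul_I,
    Complex.exp_pi_mul_I]
  ring

lemma sign0 : cexp ((Real.pi : ℂ) * I * 0) = 1 := by simp

lemma sign1 : cexp ((Real.pi : ℂ) * I * 1) = -1 := by
  rw [mul_one]; exact Complex.exp_pi_mul_I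

lemma sign2 : cexp ((Real.pi : ℂ) * I * 2) = 1 := by
  rw [show (Real.pi : ℂ) * I * 2 = ((1 : ℤ) : ℂ) * (2 * (Real.pi : ℂ) * I) by push_cast; ring]
  exact Complex.exp_int_mul_two_pi_mul_I 1

lemma summable_1d (c d : ℝ) (hc : 0 < c) :
    Summable fun n : ℤ => Real.exp (-c * (n : ℝ) ^ 2 + d * n) := by
  have hπ := Real.pi_pos
  have h : Summable fun n : ℤ =>
      jacobiTheta₂_term n (((-(d / (2 * Real.pi))) : ℝ) * I) (((c / Real.pi) : ℝ) * I) := by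
    rw [summable_jacobiTheta₂_term_iff]
    simp only [Complex.mul_im, Complex.ofReal_re, Complex.ofReal_im, Complex.I_im,
      Complex.I_re, mul_zero, zero_mul, mul_one, add_zero, zero_add]
    positivity
  refine (summable_norm_iff.mpr h).congr fun n => ?_
  rw [norm_jacobiTheta₂_term]
  congr 1
  simp only [Complex.mul_im, Complex.ofReal_re, Complex.ofReal_im, Complex.I_im,
    Complex.I_re, mul_zero, zero_mul, mul_one, add_zero, zero_add]
  field_simp
  ring

lemma summable_gauss1 (ε a : ℝ) (hε : 0 < ε) :
    Summable fun n : ℤ => Real.exp (-ε * ((n : ℝ) + a) ^ 2) := by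
  refine ((summable_1d ε (-2 * ε * a) hε).mul_left (Real.exp (-ε * a ^ 2))).congr fun n => ?_
  rw [← Real.exp_add]
  congr 1
  ring

lemma summable_major (ε : ℝ) (hε : 0 < ε) (a : Fin 2 → ℝ) :
    Summable fun u : V => Real.exp (-ε * (((u 0 : ℝ) + a 0) ^ 2 + ((u 1 : ℝ) + a 1) ^ 2)) := by
  have h := (summable_gauss1 ε (a 0) hε).mul_of_nonneg (summable_gauss1 ε (a 1) hε)
    (fun n => (Real.exp_pos _).le) (fun n => (Real.exp_pos _).le)
  refine ((piFinTwoEquiv fun _ => ℤ).summable_iff.mpr h).congr fun u => ?_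
  simp only [Function.comp_apply, piFinTwoEquiv_apply]
  rw [← Real.exp_add]
  congr 1
  ring

lemma re_pi_I (z : ℂ) : ((Real.pi : ℂ) * Complex.I * z).re = -Real.pi * z.im := by
  simp [Complex.mul_re, Complex.mul_im]

lemma im_sandwich (r r' : ℝ) (z : ℂ) : (((r : ℝ) : ℂ) * z * ((r' : ℝ) : ℂ)).im
    = r * r' * z.im := by
  simp [Complex.mul_im, Complex.mul_re]
  ring

lemma summable_like (σ : Matrix (Fin 2) (Fin 2) ℂ) {ε : ℝ} (hε : 0 < ε)
    (hQ : ∀ x : Fin 2 → ℝ, ε * (x 0 ^ 2 + x 1 ^ 2) ≤ ∑ i, ∑ j, x i * (σ i j).im * x j)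
    (a b : Fin 2 → ℚ) :
    Summable (θt a b σ) := by
  have hπ := Real.pi_pos
  refine Summable.of_norm_bounded
    (g := fun u : V => Real.exp (-(Real.pi * ε) *
      (((u 0 : ℝ) + (a 0 : ℝ)) ^ 2 + ((u 1 : ℝ) + (a 1 : ℝ)) ^ 2)))
    (summable_major (Real.pi * ε) (by positivity) (fun i => (a i : ℝ))) (fun u => ?_)
  simp only [θt, Complex.norm_exp, Real.exp_le_exp, re_pi_I]
  have hq := hQ (fun i => (u i : ℝ) + (a i : ℝ))
  simp only [Fin.sum_univ_two] at hq
  have hq' := mul_le_mul_of_nonneg_left hq hπ.le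
  have hx : ∀ i, ((u i : ℂ) + ((a i : ℚ) : ℂ)) = ((((u i : ℝ) + (a i : ℝ)) : ℝ) : ℂ) := by
    intro i; push_cast; ring
  have hbb : ∀ i, ((((u i : ℝ) + (a i : ℝ) : ℝ)) : ℂ) * ((b i : ℚ) : ℂ)
      = ((((u i : ℝ) + (a i : ℝ)) * (b i : ℝ) : ℝ) : ℂ) := by
    intro i; push_cast; ring
  simp only [Fin.sum_univ_two, hx, hbb, im_sandwich, Complex.add_im, Complex.mul_im,
    Complex.ofReal_im, Complex.ofReal_re, Complex.mul_re, Complex.re_ofNat,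
    Complex.im_ofNat]
  nlinarith [hq']

lemma exists_eps (τ : Matrix (Fin 2) (Fin 2) ℂ) (hpos : (τ.map Complex.im).PosDef) :
    ∃ ε : ℝ, 0 < ε ∧
      ∀ x : Fin 2 → ℝ, ε * (x 0 ^ 2 + x 1 ^ 2) ≤ ∑ i, ∑ j, x i * (τ i j).im * x j := by
  obtain ⟨hherm, hq⟩ := Matrix.posDef_iff_dotProduct_mulVec.mp hpos
  set p := (τ 0 0).im with hp'
  set q := (τ 0 1).im with hq1'
  set r := (τ 1 1).im with hr'
  have hsymm : (τ 1 0).im = q := by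
    have := congrFun (congrFun hherm 1) 0
    simpa [Matrix.conjTranspose_apply, Matrix.map_apply] using this.symm
  have hquad : ∀ x : Fin 2 → ℝ, x ≠ 0 →
      0 < p * x 0 ^ 2 + 2 * q * x 0 * x 1 + r * x 1 ^ 2 := by
    intro x hx
    have := hq hx
    simp only [dotProduct, Matrix.mulVec, Matrix.map_apply, Fin.sum_univ_two,
      dotProduct, star_trivial, Pi.star_apply] at this
    rw [hsymm, ← hp', ← hq1', ← hr'] at this
    nlinarith [this]
  have hp : 0 < p := by
    have := hquad ![1, 0] (by intro h; simpa using congrFun h 0)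
    simpa using this
  have hr : 0 < r := by
    have := hquad ![0, 1] (by intro h; simpa using congrFun h 1)
    simpa using this
  have hdet : 0 < p * r - q * q := by
    have := hquad ![q, -p] (by intro h; have := congrFun h 1; simp at this; linarith)
    simp at this
    nlinarith [this]
  refine ⟨(p * r - q * q) / (p + r), by positivity, fun x => ?_⟩
  set ε := (p * r - q * q) / (p + r) with hε'
  have hkey : ε * (p + r) = p * r - q * q := by
    rw [hε']; field_simp
  have hεpos : 0 < ε := by positivity
  have hεp : ε < p := by nlinarith [sq_nonneg q]
  simp only [Fin.sum_univ_two, hsymm]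
  nlinarith [sq_nonneg ((p - ε) * x 0 + q * x 1), sq_nonneg (ε * x 1), sq_nonneg (x 1),
    mul_pos (sub_pos.mpr hεp) hεpos]

lemma T_eq (τ : Matrix (Fin 2) (Fin 2) ℂ) (a b : Fin 2 → ℚ) (t s c : V) (u v : V) (k : ℤ)
    (h : Ld t c + (Eq2 τ (fun i => u i + v i + t i) +
          Ld (fun i => u i + v i + t i) (xor2 s c)) +
        (Eq2 τ (fun i => u i - v i) + Ld (fun i => u i - v i) c)
      = (((∑ i, ∑ j, ((u i : ℂ) + (a i : ℂ)) * τ i j * ((u j : ℂ) + (a j : ℂ))) +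
          2 * ∑ i, ((u i : ℂ) + (a i : ℂ)) * (b i : ℂ)) +
        ((∑ i, ∑ j, ((v i : ℂ) + (a i : ℂ)) * τ i j * ((v j : ℂ) + (a j : ℂ))) +
          2 * ∑ i, ((v i : ℂ) + (a i : ℂ)) * (b i : ℂ))) + 2 * k) :
    cexp ((Real.pi : ℂ) * I * (Ld t c + (Eq2 τ (fun i => u i + v i + t i) +
          Ld (fun i => u i + v i + t i) (xor2 s c)) +
        (Eq2 τ (fun i => u i - v i) + Ld (fun i => u i - v i) c)))
      = θt a b τ u * θt a b τ v := by
  rw [θt, θt, ← Complex.exp_add, ← mul_add]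
  exact exp_even _ _ k (by linear_combination h)

set_option maxHeartbeats 1000000 in
lemma core (τ : Matrix (Fin 2) (Fin 2) ℂ) {ε : ℝ} (hε : 0 < ε)
    (hQ : ∀ x : Fin 2 → ℝ, ε * (x 0 ^ 2 + x 1 ^ 2) ≤ ∑ i, ∑ j, x i * (τ i j).im * x j)
    (t s : V) (a b : Fin 2 → ℚ)
    (ha : ∀ i, ((a i : ℚ) : ℂ) = ((t i : ℤ) : ℂ) / 2)
    (hb : ∀ i, ((b i : ℚ) : ℂ) = ((s i : ℤ) : ℂ) / 2) :
    4 * thetaNull2 a b τ ^ 2 =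
      cexp ((Real.pi : ℂ) * I * Ld t ![0,0]) * (Fc τ (xor2 s ![0,0]) * Fc τ ![0,0]) +
      cexp ((Real.pi : ℂ) * I * Ld t ![1,0]) * (Fc τ (xor2 s ![1,0]) * Fc τ ![1,0]) +
      cexp ((Real.pi : ℂ) * I * Ld t ![0,1]) * (Fc τ (xor2 s ![0,1]) * Fc τ ![0,1]) +
      cexp ((Real.pi : ℂ) * I * Ld t ![1,1]) * (Fc τ (xor2 s ![1,1]) * Fc τ ![1,1]) := by
  classical
  have hθs : Summable (θt a b τ) := summable_like τ hε hQ a b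
  have hθn : Summable fun u => ‖θt a b τ u‖ := summable_norm_iff.mpr hθs
  -- summability of the F-terms
  have hQhalf : ∀ x : Fin 2 → ℝ,
      (ε / 2) * (x 0 ^ 2 + x 1 ^ 2) ≤ ∑ i, ∑ j, x i * ((((2 : ℂ)⁻¹ • τ) i j).im) * x j := by
    intro x
    have h0 := hQ x
    simp only [Fin.sum_univ_two] at h0 ⊢
    have him : ∀ i j : Fin 2, (((2 : ℂ)⁻¹ • τ) i j).im = (τ i j).im / 2 := by
      intro i j
      simp [Matrix.smul_apply, Complex.mul_im]
      ring
    rw [him, him, him, him]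
    nlinarith [h0]
  have hFs : ∀ c : V, Summable (Fterm τ c) := by
    intro c
    have h := summable_like ((2 : ℂ)⁻¹ • τ) (by positivity : (0:ℝ) < ε / 2) hQhalf
      (fun _ => 0) (fun i => (c i : ℚ) / 2)
    refine h.congr fun m => ?_
    rw [θt, Fterm, Eq2, Ld]
    congr 1
    simp only [Fin.sum_univ_two, Matrix.smul_apply, smul_eq_mul]
    push_cast
    ring
  have hFn : ∀ c : V, Summable fun m => ‖Fterm τ c m‖ := fun c => summable_norm_iff.mpr (hFs c)
  -- the per-characteristic pair-term
  set T : V → V × V → ℂ := fun c p => cexp ((Real.pi : ℂ) * I *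
    (Ld t c + (Eq2 τ p.1 + Ld p.1 (xor2 s c)) + (Eq2 τ p.2 + Ld p.2 c))) with hT'
  have hT : ∀ c p, T c p
      = cexp ((Real.pi : ℂ) * I * Ld t c) * (Fterm τ (xor2 s c) p.1 * Fterm τ c p.2) := by
    intro c p
    rw [hT']
    simp only [Fterm, ← Complex.exp_add]
    congr 1
    ring
  have hTs : ∀ c : V, Summable (T c) := by
    intro c
    exact (((summable_mul_of_summable_norm (hFn (xor2 s c)) (hFn c)).mul_left
      (cexp ((Real.pi : ℂ) * I * Ld t c)))).congr fun p => (hT c p).symm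
  have hFcFc : ∀ c : V,
      cexp ((Real.pi : ℂ) * I * Ld t c) * (Fc τ (xor2 s c) * Fc τ c) = ∑' p : V × V, T c p := by
    intro c
    rw [Fc, Fc, tsum_mul_tsum_of_summable_norm (hFn (xor2 s c)) (hFn c), ← tsum_mul_left]
    exact tsum_congr fun p => (hT c p).symm
  rw [hFcFc ![0,0], hFcFc ![1,0], hFcFc ![0,1], hFcFc ![1,1],
    ← Summable.tsum_add (hTs ![0,0]) (hTs ![1,0]),
    ← Summable.tsum_add ((hTs ![0,0]).add (hTs ![1,0])) (hTs ![0,1]),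
    ← Summable.tsum_add (((hTs ![0,0]).add (hTs ![1,0])).add (hTs ![0,1])) (hTs ![1,1])]
  -- reindex by (u, v) ↦ (u + v + t, u - v)
  set ψ : V × V → V × V := fun q => (fun i => q.1 i + q.2 i + t i, fun i => q.1 i - q.2 i)
    with hψ'
  have hinj : Function.Injective ψ := by
    rintro ⟨u, v⟩ ⟨u', v'⟩ h
    rw [hψ'] at h
    simp only [Prod.mk.injEq, funext_iff] at h
    obtain ⟨h1, h2⟩ := h
    rw [Prod.ext_iff]
    constructor <;> funext i <;> (have e1 := h1 i; have e2 := h2 i; dsimp at e1 e2 ⊢; omega)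
  have hsupp : Function.support
      (fun p : V × V => T ![0,0] p + T ![1,0] p + T ![0,1] p + T ![1,1] p)
      ⊆ Set.range ψ := by
    intro p hp
    by_contra hmem
    apply hp
    show T ![0,0] p + T ![1,0] p + T ![0,1] p + T ![1,1] p = 0
    have hodd : ¬ Even (p.1 0 + p.2 0 + t 0) ∨ ¬ Even (p.1 1 + p.2 1 + t 1) := by
      by_contra hcon
      push_neg at hcon
      obtain ⟨he0, he1⟩ := hcon
      rcases he0 with ⟨k0, hk0⟩
      rcases he1 with ⟨k1, hk1⟩
      refine hmem ⟨(fun i => (if i = 0 then k0 else k1) - t i,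
        fun i => p.1 i - (if i = 0 then k0 else k1)), ?_⟩
      rw [hψ', Prod.ext_iff]
      constructor <;> funext i <;> fin_cases i <;> simp <;> omega
    have expand : ∀ c : V, T c p = cexp ((Real.pi : ℂ) * I *
        (Ld t c + (Eq2 τ p.1 + Ld p.1 (xor2 s c)) + (Eq2 τ p.2 + Ld p.2 c))) := fun c => rfl
    rcases hodd with h | h
    · rw [Int.not_even_iff_odd] at h
      obtain ⟨k, hk⟩ := h
      have hkc : (p.1 0 : ℂ) + (p.2 0 : ℂ) + (t 0 : ℂ) = 2 * k + 1 := by exact_mod_cast hk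
      have e1 : T ![1,0] p = - T ![0,0] p := by
        rw [expand, expand]
        refine exp_odd _ _ (k - p.1 0 * s 0) ?_
        simp only [Ld, Eq2, xor2, Fin.sum_univ_two, Matrix.cons_val_zero,
          Matrix.cons_val_one, Matrix.head_cons]
        push_cast
        linear_combination hkc
      have e2 : T ![1,1] p = - T ![0,1] p := by
        rw [expand, expand]
        refine exp_odd _ _ (k - p.1 0 * s 0) ?_
        simp only [Ld, Eq2, xor2, Fin.sum_univ_two, Matrix.cons_val_zero,
          Matrix.cons_val_one, Matrix.head_cons]
        push_cast
        linear_combination hkc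
      rw [e1, e2]
      ring
    · rw [Int.not_even_iff_odd] at h
      obtain ⟨k, hk⟩ := h
      have hkc : (p.1 1 : ℂ) + (p.2 1 : ℂ) + (t 1 : ℂ) = 2 * k + 1 := by exact_mod_cast hk
      have e1 : T ![0,1] p = - T ![0,0] p := by
        rw [expand, expand]
        refine exp_odd _ _ (k - p.1 1 * s 1) ?_
        simp only [Ld, Eq2, xor2, Fin.sum_univ_two, Matrix.cons_val_zero,
          Matrix.cons_val_one, Matrix.head_cons]
        push_cast
        linear_combination hkc
      have e2 : T ![1,1] p = - T ![1,0] p := by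
        rw [expand, expand]
        refine exp_odd _ _ (k - p.1 1 * s 1) ?_
        simp only [Ld, Eq2, xor2, Fin.sum_univ_two, Matrix.cons_val_zero,
          Matrix.cons_val_one, Matrix.head_cons]
        push_cast
        linear_combination hkc
      rw [e1, e2]
      ring
  rw [← hinj.tsum_eq hsupp, thetaNull2_eq, sq,
    tsum_mul_tsum_of_summable_norm hθn hθn, ← tsum_mul_left]
  refine tsum_congr fun q => ?_
  obtain ⟨u, v⟩ := q
  have hTψ : ∀ c : V, T c (ψ (u, v)) = cexp ((Real.pi : ℂ) * I *
      (Ld t c + (Eq2 τ (fun i => u i + v i + t i) +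
        Ld (fun i => u i + v i + t i) (xor2 s c)) +
      (Eq2 τ (fun i => u i - v i) + Ld (fun i => u i - v i) c))) := fun c => rfl
  have g1 : T ![0,0] (ψ (u, v)) = θt a b τ u * θt a b τ v := by
    rw [hTψ]
    refine T_eq τ a b t s ![0,0] u v 0 ?_
    simp only [Ld, Eq2, xor2, Fin.sum_univ_two, Matrix.cons_val_zero, Matrix.cons_val_one,
      Matrix.head_cons, ha, hb]
    push_cast
    ring
  have g2 : T ![1,0] (ψ (u, v)) = θt a b τ u * θt a b τ v := by
    rw [hTψ]
    refine T_eq τ a b t s ![1,0] u v (t 0 + u 0 - (u 0 + v 0 + t 0) * s 0) ?_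
    simp only [Ld, Eq2, xor2, Fin.sum_univ_two, Matrix.cons_val_zero, Matrix.cons_val_one,
      Matrix.head_cons, ha, hb]
    push_cast
    ring
  have g3 : T ![0,1] (ψ (u, v)) = θt a b τ u * θt a b τ v := by
    rw [hTψ]
    refine T_eq τ a b t s ![0,1] u v (t 1 + u 1 - (u 1 + v 1 + t 1) * s 1) ?_
    simp only [Ld, Eq2, xor2, Fin.sum_univ_two, Matrix.cons_val_zero, Matrix.cons_val_one,
      Matrix.head_cons, ha, hb]
    push_cast
    ring
  have g4 : T ![1,1] (ψ (u, v)) = θt a b τ u * θt a b τ v := by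
    rw [hTψ]
    refine T_eq τ a b t s ![1,1] u v ((t 0 + u 0 - (u 0 + v 0 + t 0) * s 0) +
      (t 1 + u 1 - (u 1 + v 1 + t 1) * s 1)) ?_
    simp only [Ld, Eq2, xor2, Fin.sum_univ_two, Matrix.cons_val_zero, Matrix.cons_val_one,
      Matrix.head_cons, ha, hb]
    push_cast
    ring
  rw [g1, g2, g3, g4]
  ring

lemma xor2_eval (s c : V) :
    xor2 s c = ![s 0 + c 0 - 2 * s 0 * c 0, s 1 + c 1 - 2 * s 1 * c 1] := by
  funext i; fin_cases i <;> simp [xor2]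

lemma Ld_eval (m c : V) : Ld m c = ((m 0 * c 0 + m 1 * c 1 : ℤ) : ℂ) := by
  rw [Ld]
  simp only [Fin.sum_univ_two]
  push_cast
  ring

end GoepelAux

/-- the six theta-constant identities arising from the third Göpel group,
relating `θ₂, θ₄, θ₅, θ₆, θ₈, θ₁₀` to `θ₁, θ₃, θ₇, θ₉`. -/
theorem theta_identities_goepel_iii (τ : Matrix (Fin 2) (Fin 2) ℂ)
    (hsym : τ.IsSymm) (hpos : (τ.map Complex.im).PosDef) :
    θ₂ τ ^ 2 * θ₄ τ ^ 2 = θ₁ τ ^ 2 * θ₃ τ ^ 2 - θ₇ τ ^ 2 * θ₉ τ ^ 2 ∧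
    θ₂ τ ^ 4 + θ₄ τ ^ 4 = θ₁ τ ^ 4 + θ₃ τ ^ 4 - θ₇ τ ^ 4 - θ₉ τ ^ 4 ∧
    θ₈ τ ^ 2 * θ₅ τ ^ 2 = θ₁ τ ^ 2 * θ₇ τ ^ 2 - θ₃ τ ^ 2 * θ₉ τ ^ 2 ∧
    θ₈ τ ^ 4 + θ₅ τ ^ 4 = θ₁ τ ^ 4 - θ₃ τ ^ 4 + θ₇ τ ^ 4 - θ₉ τ ^ 4 ∧
    θ₆ τ ^ 2 * θ₁₀ τ ^ 2 = -(θ₁ τ ^ 2 * θ₉ τ ^ 2) + θ₃ τ ^ 2 * θ₇ τ ^ 2 ∧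
    θ₆ τ ^ 4 + θ₁₀ τ ^ 4 = θ₁ τ ^ 4 - θ₃ τ ^ 4 - θ₇ τ ^ 4 + θ₉ τ ^ 4 := by
  obtain ⟨ε, hε, hQ⟩ := GoepelAux.exists_eps τ hpos
  open GoepelAux in
  have h1 : 4 * θ₁ τ ^ 2 = Fc τ ![0, 0] * Fc τ ![0, 0] + Fc τ ![1, 0] * Fc τ ![1, 0] + Fc τ ![0, 1] * Fc τ ![0, 1] + Fc τ ![1, 1] * Fc τ ![1, 1] := by
    have h := GoepelAux.core τ hε hQ ![0, 0] ![0, 0] ![0, 0] ![0, 0]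
      (by intro i; fin_cases i <;> norm_num) (by intro i; fin_cases i <;> norm_num)
    rw [show θ₁ τ = thetaNull2 ![0, 0] ![0, 0] τ from rfl, h]
    norm_num [GoepelAux.xor2_eval, GoepelAux.Ld_eval, Complex.exp_pi_mul_I, GoepelAux.sign2]
    try ring
  have h2 : 4 * θ₂ τ ^ 2 = Fc τ ![1, 1] * Fc τ ![0, 0] + Fc τ ![0, 1] * Fc τ ![1, 0] + Fc τ ![1, 0] * Fc τ ![0, 1] + Fc τ ![0, 0] * Fc τ ![1, 1] := by
    have h := GoepelAux.core τ hε hQ ![0, 0] ![1, 1] ![0, 0] ![1/2, 1/2]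
      (by intro i; fin_cases i <;> norm_num) (by intro i; fin_cases i <;> norm_num)
    rw [show θ₂ τ = thetaNull2 ![0, 0] ![1/2, 1/2] τ from rfl, h]
    norm_num [GoepelAux.xor2_eval, GoepelAux.Ld_eval, Complex.exp_pi_mul_I, GoepelAux.sign2]
    try ring
  have h3 : 4 * θ₃ τ ^ 2 = Fc τ ![1, 0] * Fc τ ![0, 0] + Fc τ ![0, 0] * Fc τ ![1, 0] + Fc τ ![1, 1] * Fc τ ![0, 1] + Fc τ ![0, 1] * Fc τ ![1, 1] := by
    have h := GoepelAux.core τ hε hQ ![0, 0] ![1, 0] ![0, 0] ![1/2, 0]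
      (by intro i; fin_cases i <;> norm_num) (by intro i; fin_cases i <;> norm_num)
    rw [show θ₃ τ = thetaNull2 ![0, 0] ![1/2, 0] τ from rfl, h]
    norm_num [GoepelAux.xor2_eval, GoepelAux.Ld_eval, Complex.exp_pi_mul_I, GoepelAux.sign2]
    try ring
  have h4 : 4 * θ₄ τ ^ 2 = Fc τ ![0, 1] * Fc τ ![0, 0] + Fc τ ![1, 1] * Fc τ ![1, 0] + Fc τ ![0, 0] * Fc τ ![0, 1] + Fc τ ![1, 0] * Fc τ ![1, 1] := by
    have h := GoepelAux.core τ hε hQ ![0, 0] ![0, 1] ![0, 0] ![0, 1/2]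
      (by intro i; fin_cases i <;> norm_num) (by intro i; fin_cases i <;> norm_num)
    rw [show θ₄ τ = thetaNull2 ![0, 0] ![0, 1/2] τ from rfl, h]
    norm_num [GoepelAux.xor2_eval, GoepelAux.Ld_eval, Complex.exp_pi_mul_I, GoepelAux.sign2]
    try ring
  have h5 : 4 * θ₅ τ ^ 2 = Fc τ ![0, 0] * Fc τ ![0, 0] - Fc τ ![1, 0] * Fc τ ![1, 0] + Fc τ ![0, 1] * Fc τ ![0, 1] - Fc τ ![1, 1] * Fc τ ![1, 1] := by
    have h := GoepelAux.core τ hε hQ ![1, 0] ![0, 0] ![1/2, 0] ![0, 0]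
      (by intro i; fin_cases i <;> norm_num) (by intro i; fin_cases i <;> norm_num)
    rw [show θ₅ τ = thetaNull2 ![1/2, 0] ![0, 0] τ from rfl, h]
    norm_num [GoepelAux.xor2_eval, GoepelAux.Ld_eval, Complex.exp_pi_mul_I, GoepelAux.sign2]
    try ring
  have h6 : 4 * θ₆ τ ^ 2 = Fc τ ![0, 1] * Fc τ ![0, 0] - Fc τ ![1, 1] * Fc τ ![1, 0] + Fc τ ![0, 0] * Fc τ ![0, 1] - Fc τ ![1, 0] * Fc τ ![1, 1] := by
    have h := GoepelAux.core τ hε hQ ![1, 0] ![0, 1] ![1/2, 0] ![0, 1/2]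
      (by intro i; fin_cases i <;> norm_num) (by intro i; fin_cases i <;> norm_num)
    rw [show θ₆ τ = thetaNull2 ![1/2, 0] ![0, 1/2] τ from rfl, h]
    norm_num [GoepelAux.xor2_eval, GoepelAux.Ld_eval, Complex.exp_pi_mul_I, GoepelAux.sign2]
    try ring
  have h7 : 4 * θ₇ τ ^ 2 = Fc τ ![0, 0] * Fc τ ![0, 0] + Fc τ ![1, 0] * Fc τ ![1, 0] - Fc τ ![0, 1] * Fc τ ![0, 1] - Fc τ ![1, 1] * Fc τ ![1, 1] := by
    have h := GoepelAux.core τ hε hQ ![0, 1] ![0, 0] ![0, 1/2] ![0, 0]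
      (by intro i; fin_cases i <;> norm_num) (by intro i; fin_cases i <;> norm_num)
    rw [show θ₇ τ = thetaNull2 ![0, 1/2] ![0, 0] τ from rfl, h]
    norm_num [GoepelAux.xor2_eval, GoepelAux.Ld_eval, Complex.exp_pi_mul_I, GoepelAux.sign2]
    try ring
  have h8 : 4 * θ₈ τ ^ 2 = Fc τ ![0, 0] * Fc τ ![0, 0] - Fc τ ![1, 0] * Fc τ ![1, 0] - Fc τ ![0, 1] * Fc τ ![0, 1] + Fc τ ![1, 1] * Fc τ ![1, 1] := by
    have h := GoepelAux.core τ hε hQ ![1, 1] ![0, 0] ![1/2, 1/2] ![0, 0]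
      (by intro i; fin_cases i <;> norm_num) (by intro i; fin_cases i <;> norm_num)
    rw [show θ₈ τ = thetaNull2 ![1/2, 1/2] ![0, 0] τ from rfl, h]
    norm_num [GoepelAux.xor2_eval, GoepelAux.Ld_eval, Complex.exp_pi_mul_I, GoepelAux.sign2]
    try ring
  have h9 : 4 * θ₉ τ ^ 2 = Fc τ ![1, 0] * Fc τ ![0, 0] + Fc τ ![0, 0] * Fc τ ![1, 0] - Fc τ ![1, 1] * Fc τ ![0, 1] - Fc τ ![0, 1] * Fc τ ![1, 1] := by
    have h := GoepelAux.core τ hε hQ ![0, 1] ![1, 0] ![0, 1/2] ![1/2, 0]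
      (by intro i; fin_cases i <;> norm_num) (by intro i; fin_cases i <;> norm_num)
    rw [show θ₉ τ = thetaNull2 ![0, 1/2] ![1/2, 0] τ from rfl, h]
    norm_num [GoepelAux.xor2_eval, GoepelAux.Ld_eval, Complex.exp_pi_mul_I, GoepelAux.sign2]
    try ring
  have h10 : 4 * θ₁₀ τ ^ 2 = Fc τ ![1, 1] * Fc τ ![0, 0] - Fc τ ![0, 1] * Fc τ ![1, 0] - Fc τ ![1, 0] * Fc τ ![0, 1] + Fc τ ![0, 0] * Fc τ ![1, 1] := by
    have h := GoepelAux.core τ hε hQ ![1, 1] ![1, 1] ![1/2, 1/2] ![1/2, 1/2]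
      (by intro i; fin_cases i <;> norm_num) (by intro i; fin_cases i <;> norm_num)
    rw [show θ₁₀ τ = thetaNull2 ![1/2, 1/2] ![1/2, 1/2] τ from rfl, h]
    norm_num [GoepelAux.xor2_eval, GoepelAux.Ld_eval, Complex.exp_pi_mul_I, GoepelAux.sign2]
    try ring
  have e1 : θ₁ τ ^ 2 = (Fc τ ![0, 0] * Fc τ ![0, 0] + Fc τ ![1, 0] * Fc τ ![1, 0] + Fc τ ![0, 1] * Fc τ ![0, 1] + Fc τ ![1, 1] * Fc τ ![1, 1]) / 4 := by
    linear_combination h1 / 4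
  have f1 : θ₁ τ ^ 4 = ((Fc τ ![0, 0] * Fc τ ![0, 0] + Fc τ ![1, 0] * Fc τ ![1, 0] + Fc τ ![0, 1] * Fc τ ![0, 1] + Fc τ ![1, 1] * Fc τ ![1, 1]) / 4) ^ 2 := by
    rw [show θ₁ τ ^ 4 = (θ₁ τ ^ 2) ^ 2 from by ring, e1]
  have e2 : θ₂ τ ^ 2 = (Fc τ ![1, 1] * Fc τ ![0, 0] + Fc τ ![0, 1] * Fc τ ![1, 0] + Fc τ ![1, 0] * Fc τ ![0, 1] + Fc τ ![0, 0] * Fc τ ![1, 1]) / 4 := by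
    linear_combination h2 / 4
  have f2 : θ₂ τ ^ 4 = ((Fc τ ![1, 1] * Fc τ ![0, 0] + Fc τ ![0, 1] * Fc τ ![1, 0] + Fc τ ![1, 0] * Fc τ ![0, 1] + Fc τ ![0, 0] * Fc τ ![1, 1]) / 4) ^ 2 := by
    rw [show θ₂ τ ^ 4 = (θ₂ τ ^ 2) ^ 2 from by ring, e2]
  have e3 : θ₃ τ ^ 2 = (Fc τ ![1, 0] * Fc τ ![0, 0] + Fc τ ![0, 0] * Fc τ ![1, 0] + Fc τ ![1, 1] * Fc τ ![0, 1] + Fc τ ![0, 1] * Fc τ ![1, 1]) / 4 := by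
    linear_combination h3 / 4
  have f3 : θ₃ τ ^ 4 = ((Fc τ ![1, 0] * Fc τ ![0, 0] + Fc τ ![0, 0] * Fc τ ![1, 0] + Fc τ ![1, 1] * Fc τ ![0, 1] + Fc τ ![0, 1] * Fc τ ![1, 1]) / 4) ^ 2 := by
    rw [show θ₃ τ ^ 4 = (θ₃ τ ^ 2) ^ 2 from by ring, e3]
  have e4 : θ₄ τ ^ 2 = (Fc τ ![0, 1] * Fc τ ![0, 0] + Fc τ ![1, 1] * Fc τ ![1, 0] + Fc τ ![0, 0] * Fc τ ![0, 1] + Fc τ ![1, 0] * Fc τ ![1, 1]) / 4 := by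
    linear_combination h4 / 4
  have f4 : θ₄ τ ^ 4 = ((Fc τ ![0, 1] * Fc τ ![0, 0] + Fc τ ![1, 1] * Fc τ ![1, 0] + Fc τ ![0, 0] * Fc τ ![0, 1] + Fc τ ![1, 0] * Fc τ ![1, 1]) / 4) ^ 2 := by
    rw [show θ₄ τ ^ 4 = (θ₄ τ ^ 2) ^ 2 from by ring, e4]
  have e5 : θ₅ τ ^ 2 = (Fc τ ![0, 0] * Fc τ ![0, 0] - Fc τ ![1, 0] * Fc τ ![1, 0] + Fc τ ![0, 1] * Fc τ ![0, 1] - Fc τ ![1, 1] * Fc τ ![1, 1]) / 4 := by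
    linear_combination h5 / 4
  have f5 : θ₅ τ ^ 4 = ((Fc τ ![0, 0] * Fc τ ![0, 0] - Fc τ ![1, 0] * Fc τ ![1, 0] + Fc τ ![0, 1] * Fc τ ![0, 1] - Fc τ ![1, 1] * Fc τ ![1, 1]) / 4) ^ 2 := by
    rw [show θ₅ τ ^ 4 = (θ₅ τ ^ 2) ^ 2 from by ring, e5]
  have e6 : θ₆ τ ^ 2 = (Fc τ ![0, 1] * Fc τ ![0, 0] - Fc τ ![1, 1] * Fc τ ![1, 0] + Fc τ ![0, 0] * Fc τ ![0, 1] - Fc τ ![1, 0] * Fc τ ![1, 1]) / 4 := by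
    linear_combination h6 / 4
  have f6 : θ₆ τ ^ 4 = ((Fc τ ![0, 1] * Fc τ ![0, 0] - Fc τ ![1, 1] * Fc τ ![1, 0] + Fc τ ![0, 0] * Fc τ ![0, 1] - Fc τ ![1, 0] * Fc τ ![1, 1]) / 4) ^ 2 := by
    rw [show θ₆ τ ^ 4 = (θ₆ τ ^ 2) ^ 2 from by ring, e6]
  have e7 : θ₇ τ ^ 2 = (Fc τ ![0, 0] * Fc τ ![0, 0] + Fc τ ![1, 0] * Fc τ ![1, 0] - Fc τ ![0, 1] * Fc τ ![0, 1] - Fc τ ![1, 1] * Fc τ ![1, 1]) / 4 := by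
    linear_combination h7 / 4
  have f7 : θ₇ τ ^ 4 = ((Fc τ ![0, 0] * Fc τ ![0, 0] + Fc τ ![1, 0] * Fc τ ![1, 0] - Fc τ ![0, 1] * Fc τ ![0, 1] - Fc τ ![1, 1] * Fc τ ![1, 1]) / 4) ^ 2 := by
    rw [show θ₇ τ ^ 4 = (θ₇ τ ^ 2) ^ 2 from by ring, e7]
  have e8 : θ₈ τ ^ 2 = (Fc τ ![0, 0] * Fc τ ![0, 0] - Fc τ ![1, 0] * Fc τ ![1, 0] - Fc τ ![0, 1] * Fc τ ![0, 1] + Fc τ ![1, 1] * Fc τ ![1, 1]) / 4 := by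
    linear_combination h8 / 4
  have f8 : θ₈ τ ^ 4 = ((Fc τ ![0, 0] * Fc τ ![0, 0] - Fc τ ![1, 0] * Fc τ ![1, 0] - Fc τ ![0, 1] * Fc τ ![0, 1] + Fc τ ![1, 1] * Fc τ ![1, 1]) / 4) ^ 2 := by
    rw [show θ₈ τ ^ 4 = (θ₈ τ ^ 2) ^ 2 from by ring, e8]
  have e9 : θ₉ τ ^ 2 = (Fc τ ![1, 0] * Fc τ ![0, 0] + Fc τ ![0, 0] * Fc τ ![1, 0] - Fc τ ![1, 1] * Fc τ ![0, 1] - Fc τ ![0, 1] * Fc τ ![1, 1]) / 4 := by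
    linear_combination h9 / 4
  have f9 : θ₉ τ ^ 4 = ((Fc τ ![1, 0] * Fc τ ![0, 0] + Fc τ ![0, 0] * Fc τ ![1, 0] - Fc τ ![1, 1] * Fc τ ![0, 1] - Fc τ ![0, 1] * Fc τ ![1, 1]) / 4) ^ 2 := by
    rw [show θ₉ τ ^ 4 = (θ₉ τ ^ 2) ^ 2 from by ring, e9]
  have e10 : θ₁₀ τ ^ 2 = (Fc τ ![1, 1] * Fc τ ![0, 0] - Fc τ ![0, 1] * Fc τ ![1, 0] - Fc τ ![1, 0] * Fc τ ![0, 1] + Fc τ ![0, 0] * Fc τ ![1, 1]) / 4 := by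
    linear_combination h10 / 4
  have f10 : θ₁₀ τ ^ 4 = ((Fc τ ![1, 1] * Fc τ ![0, 0] - Fc τ ![0, 1] * Fc τ ![1, 0] - Fc τ ![1, 0] * Fc τ ![0, 1] + Fc τ ![0, 0] * Fc τ ![1, 1]) / 4) ^ 2 := by
    rw [show θ₁₀ τ ^ 4 = (θ₁₀ τ ^ 2) ^ 2 from by ring, e10]
  refine ⟨?_, ?_, ?_, ?_, ?_, ?_⟩
  · rw [e2, e4, e1, e3, e7, e9]; ring
  · rw [f2, f4, f1, f3, f7, f9]; ring
  · rw [e8, e5, e1, e7, e3, e9]; ring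
  · rw [f8, f5, f1, f3, f7, f9]; ring
  · rw [e6, e10, e1, e9, e3, e7]; ring
  · rw [f6, f10, f1, f3, f7, f9]; ring
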